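/- arXiv:1401.5376 — 3 statements merged into one kernel-verified Lean document; each statement's English description precedes it below -/
import Mathlib

section
/- For every α ∈ (0,2) and R ∈ (0,1), the integral ∫₀^{2π} (sin(y/2))^{1−α} · cos(y/2) · sin(y) · [ (1 − R·cos y)^{−(α/2+1)} − (1 + R·cos y)^{−(α/2+1)} ] dy is strictly positive. -/
open Real MeasureTheory

noncomputable def hfun (α R : ℝ) (y : ℝ) : ℝ :=
  2 * Real.sin (y / 2) ^ (2 - α) * Real.cos (y / 2) ^ 2 *
    ((1 - R * Real.cos y) ^ (-(α / 2 + 1)) - (1 + R * Real.cos y) ^ (-(α / 2 + 1)))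

lemma hfun_cont (α R : ℝ) (hα : α < 2) (hR0 : 0 < R) (hR1 : R < 1) :
    Continuous (hfun α R) := by
  have hbase : ∀ (ε : ℝ) (y : ℝ), ε = 1 ∨ ε = -1 → (0:ℝ) < 1 + ε * (R * Real.cos y) := by
    intro ε y hε
    have h1 := Real.neg_one_le_cos y
    have h2 := Real.cos_le_one y
    rcases hε with h | h <;> subst h <;> nlinarith
  have c1 : Continuous fun y => Real.sin (y / 2) ^ (2 - α) := by
    apply Continuous.rpow_const (by fun_prop)
    intro x; exact Or.inr (by linarith)
  have c2 : Continuous fun y => (1 - R * Real.cos y) ^ (-(α / 2 + 1)) := by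
    apply Continuous.rpow_const (by fun_prop)
    intro x
    have := hbase (-1) x (Or.inr rfl)
    exact Or.inl (by nlinarith)
  have c3 : Continuous fun y => (1 + R * Real.cos y) ^ (-(α / 2 + 1)) := by
    apply Continuous.rpow_const (by fun_prop)
    intro x
    have := hbase 1 x (Or.inl rfl)
    exact Or.inl (by nlinarith)
  unfold hfun
  fun_prop

lemma hfun_symm (α R : ℝ) (y : ℝ) : hfun α R (2 * π - y) = hfun α R y := by
  unfold hfun
  have e1 : (2 * π - y) / 2 = π - y / 2 := by ring
  rw [e1, Real.sin_pi_sub, Real.cos_pi_sub, Real.cos_sub, Real.cos_two_pi, Real.sin_two_pi]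
  ring_nf

lemma hfun_pi_sub (α R : ℝ) (y : ℝ) : hfun α R (π - y) =
    2 * Real.cos (y / 2) ^ (2 - α) * Real.sin (y / 2) ^ 2 *
      ((1 + R * Real.cos y) ^ (-(α / 2 + 1)) - (1 - R * Real.cos y) ^ (-(α / 2 + 1))) := by
  unfold hfun
  have e1 : (π - y) / 2 = π / 2 - y / 2 := by ring
  rw [e1, Real.sin_pi_div_two_sub, Real.cos_pi_div_two_sub, Real.cos_pi_sub]
  ring_nf

/-- Positivity of `∫₀^{2π} (sin(y/2))^{1-α} cos(y/2) sin(y) D_{R,α}(y) dy`. -/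
theorem integral_pos_two_pi (α R : ℝ) (hα : α ∈ Set.Ioo (0 : ℝ) 2)
    (hR : R ∈ Set.Ioo (0 : ℝ) 1) :
    0 < ∫ y in (0 : ℝ)..(2 * π),
        Real.sin (y / 2) ^ (1 - α) * Real.cos (y / 2) * Real.sin y *
          ((1 - R * Real.cos y) ^ (-(α / 2 + 1)) -
            (1 + R * Real.cos y) ^ (-(α / 2 + 1))) := by
  obtain ⟨hα0, hα2⟩ := hα
  obtain ⟨hR0, hR1⟩ := hR
  have hπ := Real.pi_pos
  have hcont := hfun_cont α R hα2 hR0 hR1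
  -- Step 1: replace integrand by hfun
  have step1 : (∫ y in (0 : ℝ)..(2 * π),
        Real.sin (y / 2) ^ (1 - α) * Real.cos (y / 2) * Real.sin y *
          ((1 - R * Real.cos y) ^ (-(α / 2 + 1)) -
            (1 + R * Real.cos y) ^ (-(α / 2 + 1))))
      = ∫ y in (0 : ℝ)..(2 * π), hfun α R y := by
    apply intervalIntegral.integral_congr
    intro y hy
    rw [Set.uIcc_of_le (by linarith)] at hy
    have hs : 0 ≤ Real.sin (y / 2) :=
      Real.sin_nonneg_of_nonneg_of_le_pi (by linarith [hy.1]) (by linarith [hy.2])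
    have hsy : Real.sin y = 2 * Real.sin (y / 2) * Real.cos (y / 2) := by
      have := Real.sin_two_mul (y / 2)
      rw [show 2 * (y / 2) = y by ring] at this
      linarith
    show Real.sin (y / 2) ^ (1 - α) * Real.cos (y / 2) * Real.sin y *
          ((1 - R * Real.cos y) ^ (-(α / 2 + 1)) -
            (1 + R * Real.cos y) ^ (-(α / 2 + 1))) = _
    unfold hfun
    rcases eq_or_lt_of_le hs with h0 | h0
    · rw [hsy, ← h0, Real.zero_rpow (ne_of_gt (by linarith : (0:ℝ) < 2 - α))]
      ring
    · have : Real.sin (y / 2) ^ (2 - α) = Real.sin (y / 2) ^ (1 - α) * Real.sin (y / 2) := by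
        rw [show (2:ℝ) - α = (1 - α) + 1 by ring, Real.rpow_add h0, Real.rpow_one]
      rw [hsy, this]; ring
  rw [step1]
  -- integrability pieces
  have hint : ∀ a b : ℝ, IntervalIntegrable (hfun α R) volume a b :=
    fun a b => hcont.intervalIntegrable a b
  -- Step 2: symmetry about π
  have step2 : (∫ y in (0:ℝ)..(2 * π), hfun α R y) = 2 * ∫ y in (0:ℝ)..π, hfun α R y := by
    rw [← intervalIntegral.integral_add_adjacent_intervals (hint 0 π) (hint π (2*π))]
    have e := intervalIntegral.integral_comp_sub_left (a := 0) (b := π) (hfun α R) (2 * π)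
    simp only [hfun_symm] at e
    rw [show 2 * π - π = π by ring, show 2 * π - 0 = 2 * π by ring] at e
    rw [← e]; ring
  rw [step2]
  have step3 : (∫ y in (0:ℝ)..π, hfun α R y)
      = ∫ y in (0:ℝ)..(π/2), (hfun α R y + hfun α R (π - y)) := by
    rw [← intervalIntegral.integral_add_adjacent_intervals (hint 0 (π/2)) (hint (π/2) π)]
    have e := intervalIntegral.integral_comp_sub_left (a := 0) (b := π/2) (hfun α R) π
    rw [show π - π/2 = π/2 by ring, show π - 0 = π by ring] at e
    rw [← e]
    exact (intervalIntegral.integral_add (hint 0 (π/2))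
      ((hcont.comp (continuous_const.sub continuous_id')).intervalIntegrable 0 (π/2))).symm
  rw [step3]
  have hpos : ∀ y ∈ Set.Ioo (0:ℝ) (π/2), 0 < hfun α R y + hfun α R (π - y) := by
    intro y hy
    obtain ⟨hy0, hy1⟩ := hy
    set s := Real.sin (y / 2) with hs_def
    set c := Real.cos (y / 2) with hc_def
    have hs : 0 < s := Real.sin_pos_of_pos_of_lt_pi (by linarith) (by linarith)
    have hc : 0 < c := Real.cos_pos_of_mem_Ioo ⟨by linarith, by linarith⟩
    have hsc : s < c := by
      rw [hc_def, ← Real.sin_pi_div_two_sub]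
      exact Real.strictMonoOn_sin ⟨by linarith, by linarith⟩
        ⟨by linarith, by linarith⟩ (by linarith)
    have hcy : 0 < Real.cos y := Real.cos_pos_of_mem_Ioo ⟨by linarith, hy1⟩
    have hcy1 : Real.cos y ≤ 1 := Real.cos_le_one y
    -- D positivity
    have hD : (1 + R * Real.cos y) ^ (-(α / 2 + 1)) < (1 - R * Real.cos y) ^ (-(α / 2 + 1)) := by
      apply Real.rpow_lt_rpow_of_neg (by nlinarith) (by nlinarith) (by linarith)
    -- power comparison
    have hpow : c ^ (2 - α) * s ^ 2 < s ^ (2 - α) * c ^ 2 := by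
      have hsa : (0:ℝ) < s ^ α := Real.rpow_pos_of_pos hs α
      have hca : (0:ℝ) < c ^ α := Real.rpow_pos_of_pos hc α
      have hlt : s ^ α < c ^ α := Real.rpow_lt_rpow (le_of_lt hs) hsc hα0
      have es : s ^ (2 - α) = s ^ 2 / s ^ α := by
        rw [Real.rpow_sub hs, Real.rpow_two]
      have ec : c ^ (2 - α) = c ^ 2 / c ^ α := by
        rw [Real.rpow_sub hc, Real.rpow_two]
      rw [es, ec, div_mul_eq_mul_div, div_mul_eq_mul_div]
      rw [div_lt_div_iff₀ hca hsa]
      have hK : (0:ℝ) < s ^ 2 * c ^ 2 := by positivity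
      nlinarith
    rw [hfun_pi_sub]
    unfold hfun
    rw [← hs_def, ← hc_def]
    nlinarith [Real.rpow_pos_of_pos hs (2 - α), Real.rpow_pos_of_pos hc (2 - α)]
  apply mul_pos two_pos
  exact intervalIntegral.intervalIntegral_pos_of_pos_on
    ((hcont.add (hcont.comp (continuous_const.sub continuous_id'))).intervalIntegrable 0 (π/2))
    hpos (by linarith)
end

section
/- For every α ∈ (0,2) and R ∈ (0,1), the integral ∫₀^{π} (sin(y/2))^{2−α} · (cos(y/2))² · [ (1 − R·cos y)^{−(α/2+1)} − (1 + R·cos y)^{−(α/2+1)} ] dy is strictly positive. -/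
open Real MeasureTheory

/-- Positivity of `∫₀^{π} (sin(y/2))^{2-α} (cos(y/2))² D_{R,α}(y) dy`. -/
theorem integral_pos_pi (α R : ℝ) (hα : α ∈ Set.Ioo (0 : ℝ) 2)
    (hR : R ∈ Set.Ioo (0 : ℝ) 1) :
    0 < ∫ y in (0 : ℝ)..π,
        Real.sin (y / 2) ^ (2 - α) * Real.cos (y / 2) ^ 2 *
          ((1 - R * Real.cos y) ^ (-(α / 2 + 1)) -
            (1 + R * Real.cos y) ^ (-(α / 2 + 1))) := by
  obtain ⟨hα0, hα2⟩ := hα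
  obtain ⟨hR0, hR1⟩ := hR
  set f : ℝ → ℝ := fun y =>
    Real.sin (y / 2) ^ (2 - α) * Real.cos (y / 2) ^ 2 *
      ((1 - R * Real.cos y) ^ (-(α / 2 + 1)) -
        (1 + R * Real.cos y) ^ (-(α / 2 + 1))) with hf
  have hb1 : ∀ y : ℝ, 0 < 1 - R * Real.cos y := by
    intro y
    nlinarith [Real.neg_one_le_cos y, Real.cos_le_one y]
  have hb2 : ∀ y : ℝ, 0 < 1 + R * Real.cos y := by
    intro y
    nlinarith [Real.neg_one_le_cos y, Real.cos_le_one y]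
  have hcont : Continuous f := by
    apply Continuous.mul
    · apply Continuous.mul
      · exact (Real.continuous_sin.comp (continuous_id.div_const 2)).rpow_const
          (fun x => Or.inr (by linarith))
      · exact (Real.continuous_cos.comp (continuous_id.div_const 2)).pow 2
    · apply Continuous.sub
      · exact (continuous_const.sub (continuous_const.mul Real.continuous_cos)).rpow_const
          (fun x => Or.inl (ne_of_gt (hb1 x)))
      · exact (continuous_const.add (continuous_const.mul Real.continuous_cos)).rpow_const
          (fun x => Or.inl (ne_of_gt (hb2 x)))
  have hint : ∀ a b : ℝ, IntervalIntegrable f volume a b := fun a b =>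
    hcont.intervalIntegrable a b
  have hπ : (0:ℝ) < π := Real.pi_pos
  have hsplit : (∫ y in (0:ℝ)..π, f y)
      = (∫ y in (0:ℝ)..π/2, f y) + ∫ y in (π/2:ℝ)..π, f y :=
    (intervalIntegral.integral_add_adjacent_intervals (hint 0 (π/2)) (hint (π/2) π)).symm
  have hcomp : (∫ y in (π/2:ℝ)..π, f y) = ∫ y in (0:ℝ)..π/2, f (π - y) := by
    rw [intervalIntegral.integral_comp_sub_left f π, show π - π/2 = π/2 by ring, sub_zero]
  have hgc : Continuous fun y : ℝ => f (π - y) := hcont.comp (continuous_const.sub continuous_id)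
  have hadd : (∫ y in (0:ℝ)..π/2, f y) + (∫ y in (0:ℝ)..π/2, f (π - y))
      = ∫ y in (0:ℝ)..π/2, (f y + f (π - y)) := by
    rw [intervalIntegral.integral_add (hint 0 (π/2)) (hgc.intervalIntegrable 0 (π/2))]
  rw [hsplit, hcomp, hadd]
  apply intervalIntegral.intervalIntegral_pos_of_pos_on
  · exact (hcont.add hgc).intervalIntegrable 0 (π/2)
  · intro y hy
    obtain ⟨hy0, hy2⟩ := hy
    -- trig rewrites for f (π - y)
    have e1 : Real.sin ((π - y) / 2) = Real.cos (y / 2) := by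
      rw [show (π - y) / 2 = π/2 - y/2 by ring, Real.sin_pi_div_two_sub]
    have e2 : Real.cos ((π - y) / 2) = Real.sin (y / 2) := by
      rw [show (π - y) / 2 = π/2 - y/2 by ring, Real.cos_pi_div_two_sub]
    have e3 : Real.cos (π - y) = -Real.cos y := Real.cos_pi_sub y
    set s := Real.sin (y / 2) with hs
    set c := Real.cos (y / 2) with hc
    have hs0 : 0 < s := Real.sin_pos_of_pos_of_lt_pi (by linarith) (by linarith)
    have hc0 : 0 < c := Real.cos_pos_of_mem_Ioo ⟨by linarith, by linarith⟩
    have hsc : s < c := by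
      have h1 : Real.sin (y/2) = Real.cos (π/2 - y/2) := (Real.cos_pi_div_two_sub _).symm
      rw [hs, h1, hc]
      exact Real.cos_lt_cos_of_nonneg_of_le_pi (by linarith) (by linarith [Real.pi_pos]) (by linarith)
    have hcosy : 0 < Real.cos y := Real.cos_pos_of_mem_Ioo ⟨by linarith, hy2⟩
    set A := (1 - R * Real.cos y) ^ (-(α / 2 + 1)) with hA
    set B := (1 + R * Real.cos y) ^ (-(α / 2 + 1)) with hB
    have hAB : B < A := by
      apply Real.rpow_lt_rpow_of_neg (hb1 y) (by nlinarith) (by linarith)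
    have hfsum : f y + f (π - y) = (A - B) * (s ^ (2 - α) * c ^ 2 - c ^ (2 - α) * s ^ 2) := by
      simp only [hf, e1, e2, e3]
      rw [show 1 - R * -Real.cos y = 1 + R * Real.cos y by ring,
        show 1 + R * -Real.cos y = 1 - R * Real.cos y by ring]
      ring
    rw [hfsum]
    apply mul_pos (by linarith)
    have hsplitexp : ∀ x : ℝ, 0 < x → x ^ (2 - α) = x ^ 2 * x ^ (-α) := by
      intro x hx
      rw [show (2:ℝ) - α = 2 + (-α) by ring, Real.rpow_add hx, Real.rpow_two]
    rw [hsplitexp s hs0, hsplitexp c hc0]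
    have hpow : c ^ (-α) < s ^ (-α) :=
      Real.rpow_lt_rpow_of_neg hs0 hsc (by linarith)
    nlinarith [sq_nonneg s, sq_nonneg c, mul_pos (mul_pos hs0 hs0) (mul_pos hc0 hc0)]
  · linarith
end

section
/- For every α ∈ (0,2) and R ∈ (0,1), one has the identity ∫₀^{π} (sin(y/2))^{2−α} · (cos(y/2))² · D_{R,α}(y) dy = ∫₀^{π/2} (sin(y/2))^{2−α} · (cos(y/2))^{2−α} · ( (cos(y/2))^{α} − (sin(y/2))^{α} ) · D_{R,α}(y) dy, where D_{R,α}(y) = (1 − R·cos y)^{−(α/2+1)} − (1 + R·cos y)^{−(α/2+1)}. -/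
open Real MeasureTheory

/-- Folding identity: the integral over `[0,π]` equals the folded integral over
`[0,π/2]`, where `D_{R,α}(y) = (1 - R cos y)^{-(α/2+1)} - (1 + R cos y)^{-(α/2+1)}`. -/
theorem integral_fold_identity (α R : ℝ) (hα : α ∈ Set.Ioo (0 : ℝ) 2)
    (hR : R ∈ Set.Ioo (0 : ℝ) 1) :
    (∫ y in (0 : ℝ)..π,
        Real.sin (y / 2) ^ (2 - α) * Real.cos (y / 2) ^ 2 *
          ((1 - R * Real.cos y) ^ (-(α / 2 + 1)) -
            (1 + R * Real.cos y) ^ (-(α / 2 + 1))))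
      = ∫ y in (0 : ℝ)..(π / 2),
          Real.sin (y / 2) ^ (2 - α) * Real.cos (y / 2) ^ (2 - α) *
            (Real.cos (y / 2) ^ α - Real.sin (y / 2) ^ α) *
            ((1 - R * Real.cos y) ^ (-(α / 2 + 1)) -
              (1 + R * Real.cos y) ^ (-(α / 2 + 1))) := by
  obtain ⟨hα0, hα2⟩ := hα
  obtain ⟨hR0, hR1⟩ := hR
  set f : ℝ → ℝ := fun y =>
    Real.sin (y / 2) ^ (2 - α) * Real.cos (y / 2) ^ 2 *
      ((1 - R * Real.cos y) ^ (-(α / 2 + 1)) -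
        (1 + R * Real.cos y) ^ (-(α / 2 + 1))) with hf
  have hb1 : ∀ y : ℝ, (0 : ℝ) < 1 - R * Real.cos y := fun y => by
    nlinarith [Real.cos_le_one y, Real.neg_one_le_cos y]
  have hb2 : ∀ y : ℝ, (0 : ℝ) < 1 + R * Real.cos y := fun y => by
    nlinarith [Real.cos_le_one y, Real.neg_one_le_cos y]
  have hcont : Continuous f := by
    refine Continuous.mul (Continuous.mul ?_ ?_) (Continuous.sub ?_ ?_)
    · exact (Real.continuous_sin.comp (continuous_id.div_const 2)).rpow_const
        (fun x => Or.inr (by linarith))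
    · exact (Real.continuous_cos.comp (continuous_id.div_const 2)).pow 2
    · exact (continuous_const.sub (continuous_const.mul Real.continuous_cos)).rpow_const
        (fun x => Or.inl (ne_of_gt (hb1 x)))
    · exact (continuous_const.add (continuous_const.mul Real.continuous_cos)).rpow_const
        (fun x => Or.inl (ne_of_gt (hb2 x)))
  have hcont' : Continuous fun y => f (π - y) :=
    hcont.comp (continuous_const.sub continuous_id)
  have hsplit : (∫ y in (0 : ℝ)..π, f y)
      = (∫ y in (0 : ℝ)..(π / 2), f y) + ∫ y in (π / 2)..π, f y :=
    (intervalIntegral.integral_add_adjacent_intervals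
      (hcont.intervalIntegrable _ _) (hcont.intervalIntegrable _ _)).symm
  have hrefl : (∫ y in (π / 2)..π, f y) = ∫ y in (0 : ℝ)..(π / 2), f (π - y) := by
    rw [intervalIntegral.integral_comp_sub_left f π]
    norm_num [sub_half]
  rw [hsplit, hrefl, ← intervalIntegral.integral_add
    (hcont.intervalIntegrable _ _) (hcont'.intervalIntegrable _ _)]
  apply intervalIntegral.integral_congr
  intro y hy
  rw [Set.uIcc_of_le (by positivity : (0:ℝ) ≤ π / 2)] at hy
  obtain ⟨hy0, hy1⟩ := hy
  have hs : 0 ≤ Real.sin (y / 2) := Real.sin_nonneg_of_nonneg_of_le_pi (by linarith)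
    (by linarith [Real.pi_pos])
  have hc : 0 < Real.cos (y / 2) := Real.cos_pos_of_mem_Ioo
    ⟨by linarith [Real.pi_pos], by linarith [Real.pi_pos]⟩
  have hcc : Real.cos (y / 2) ^ (2 - α) * Real.cos (y / 2) ^ α = Real.cos (y / 2) ^ 2 := by
    rw [← Real.rpow_add hc, show (2 - α) + α = ((2:ℕ):ℝ) by push_cast; ring,
      Real.rpow_natCast]
  have hss : Real.sin (y / 2) ^ (2 - α) * Real.sin (y / 2) ^ α = Real.sin (y / 2) ^ 2 := by
    rw [← Real.rpow_add' hs (by norm_num), show (2 - α) + α = ((2:ℕ):ℝ) by push_cast; ring,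
      Real.rpow_natCast]
  have h1 : Real.sin ((π - y) / 2) = Real.cos (y / 2) := by
    rw [show (π - y) / 2 = π / 2 - y / 2 by ring, Real.sin_pi_div_two_sub]
  have h2 : Real.cos ((π - y) / 2) = Real.sin (y / 2) := by
    rw [show (π - y) / 2 = π / 2 - y / 2 by ring, Real.cos_pi_div_two_sub]
  simp only [hf, Real.cos_pi_sub, h1, h2, mul_neg, sub_neg_eq_add, ← sub_eq_add_neg]
  linear_combination
    -(Real.sin (y / 2) ^ (2 - α) *
        ((1 - R * Real.cos y) ^ (-(α / 2 + 1)) - (1 + R * Real.cos y) ^ (-(α / 2 + 1)))) * hcc +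
    (Real.cos (y / 2) ^ (2 - α) *
        ((1 - R * Real.cos y) ^ (-(α / 2 + 1)) - (1 + R * Real.cos y) ^ (-(α / 2 + 1)))) * hss
end
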